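/- (Induction claim (4) for ISTC) Let Ψ ∈ ℝ^{n×p} have unit-norm columns with mutual coherence μ satisfying μ·s < 1/2, where x† ∈ ℝ^p has support A† with |A†| = s ≥ 1, and y = Ψ x† + η with ‖η‖₂ ≤ ε. Let C₁ > 1/(1 − 2μs), α = (1 − 1/C₁)/(μs), γ ∈ [2μs/(1 − 1/C₁), 1), K ≥ 1 an integer, and λ* = C₁ ε. Define λ_ℓ = γ^ℓ λ₀ for ℓ ≥ 0, and define x(λ₀) = 0 and, for ℓ ≥ 1, x(λ_ℓ) as the result of K iterations of the map z ↦ S_{λ_ℓ}(z + Ψᵗ(y − Ψ z)) starting from x(λ_{ℓ−1}). If λ₀ is large enough that ‖x†‖_{ℓ∞} ≤ α γ λ₀, then for every ℓ ≥ 0 with λ_ℓ ≥ λ*, one has supp(x(λ_ℓ)) ⊂ A† and ‖x(λ_ℓ) − x†‖_{ℓ∞} ≤ α γ λ_ℓ. -/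

import Mathlib

/-!
Let `w = z + Ψᵀ(y − Ψz)` be the gradient step from a point `z` supported on `A†`. Then
`w − x† = Ψᵀη − (ΨᵀΨ − I)(z − x†)`; the Gram matrix has unit diagonal and off-diagonal entries
at most `μ`, and `z − x†` has at most `s` nonzero entries, so `|wᵢ − x†ᵢ| ≤ μ s ‖z − x†‖_∞ + ε`.
If this is at most `λ`, soft-thresholding at `λ` sets every coordinate outside `A†` to zero and
moves the others by at most `λ`, so the new error is at most `2λ`.

With `‖z − x†‖_∞ ≤ αλ` the condition reads `(1 − 1/C₁)λ + ε ≤ λ`, i.e. `λ ≥ C₁ε`, and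
`2λ ≤ αγλ ≤ αλ` because `αγ ≥ 2`. Hence the ball of radius `αλ_ℓ` around `x†` (within
vectors supported on `A†`) is mapped into the ball of radius `αγλ_ℓ` by every one of the `K`
inner iterations, and `αγλ_ℓ = αλ_{ℓ+1}` hands the invariant to the next level.
-/

open Finset Matrix

noncomputable def softThresh (lam t : ℝ) : ℝ := Real.sign t * max (|t| - lam) 0

lemma softThresh_eq_zero_of_abs_le {lam t : ℝ} (h : |t| ≤ lam) : softThresh lam t = 0 := by
  rw [softThresh, max_eq_right (sub_nonpos.mpr h), mul_zero]

lemma abs_softThresh_sub_le {lam : ℝ} (hlam : 0 ≤ lam) (t : ℝ) : |softThresh lam t - t| ≤ lam := by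
  rcases le_or_gt |t| lam with h | h
  · rwa [softThresh_eq_zero_of_abs_le h, zero_sub, abs_neg]
  rw [softThresh, max_eq_left (by linarith)]
  rcases lt_or_gt_of_ne (abs_pos.mp (hlam.trans_lt h)) with ht | ht
  · rw [Real.sign_of_neg ht, abs_of_neg ht, abs_le]
    constructor <;> linarith
  · rw [Real.sign_of_pos ht, abs_of_pos ht, abs_le]
    constructor <;> linarith

lemma abs_softThresh_sub_le_two_mul {lam t a : ℝ} (h : |t - a| ≤ lam) :
    |softThresh lam t - a| ≤ 2 * lam :=
  calc |softThresh lam t - a| ≤ |softThresh lam t - t| + |t - a| := abs_sub_le _ _ _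
    _ ≤ lam + lam := add_le_add (abs_softThresh_sub_le ((abs_nonneg _).trans h) t) h
    _ = 2 * lam := (two_mul lam).symm

lemma Set.MapsTo.iterate_of_subset {α : Type*} {f : α → α} {s t : Set α} (h : Set.MapsTo f s t)
    (hts : t ⊆ s) {n : ℕ} (hn : 0 < n) : Set.MapsTo f^[n] s t := by
  obtain ⟨k, rfl⟩ := Nat.exists_eq_succ_of_ne_zero hn.ne'
  rw [Function.iterate_succ']
  exact h.comp ((h.mono_right hts).iterate k)

lemma abs_sum_mul_le_sqrt_sum_sq {κ : Type*} [Fintype κ] {a : κ → ℝ} (ha : ∑ k, a k ^ 2 = 1)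
    (b : κ → ℝ) : |∑ k, a k * b k| ≤ √(∑ k, b k ^ 2) :=
  Real.abs_le_sqrt <| by simpa only [ha, one_mul] using sum_mul_sq_le_sq_mul_sq univ a b

lemma istc_param_bounds {μ s C₁ α γ : ℝ} (hμs₀ : 0 < μ * s) (hμs : μ * s < 1 / 2)
    (hC : 1 / (1 - 2 * μ * s) < C₁) (hα : α = (1 - 1 / C₁) / (μ * s))
    (hγ : 2 * μ * s / (1 - 1 / C₁) ≤ γ) :
    1 < C₁ ∧ 0 < α ∧ μ * s * α = 1 - 1 / C₁ ∧ 2 ≤ α * γ := by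
  have hC₁ : 1 < C₁ := (one_le_one_div (by linarith) (by linarith)).trans_lt hC
  have hκ : 0 < 1 - 1 / C₁ := sub_pos.mpr ((div_lt_one (by linarith)).mpr hC₁)
  have hα₀ : 0 < α := hα ▸ div_pos hκ hμs₀
  have hμsα : μ * s * α = 1 - 1 / C₁ := by rw [hα, mul_div_cancel₀ _ hμs₀.ne']
  refine ⟨hC₁, hα₀, hμsα, ?_⟩
  calc 2 = 2 * (μ * s * α) / (1 - 1 / C₁) := by rw [hμsα, mul_div_assoc, div_self hκ.ne', mul_one]
    _ = α * (2 * μ * s / (1 - 1 / C₁)) := by ring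
    _ ≤ α * γ := mul_le_mul_of_nonneg_left hγ hα₀.le

section Sparse

variable {ι : Type*} [Fintype ι]

def sparseBall (A : Finset ι) (x : ι → ℝ) (r : ℝ) : Set (ι → ℝ) :=
  {z | Function.support z ⊆ A ∧ ‖z - x‖ ≤ r}

lemma sparseBall_mono {A : Finset ι} {x : ι → ℝ} {r r' : ℝ} (h : r ≤ r') :
    sparseBall A x r ⊆ sparseBall A x r' :=
  fun _ hz => ⟨hz.1, hz.2.trans h⟩

lemma sum_abs_le_card_mul_norm {A : Finset ι} {v : ι → ℝ} (hv : Function.support v ⊆ A) :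
    ∑ j, |v j| ≤ #A * ‖v‖ := by
  have hzero : ∀ j ∈ univ, j ∉ A → |v j| = 0 := fun j _ hj => by
    rw [abs_eq_zero]; exact Function.notMem_support.mp fun h => hj (hv h)
  rw [← sum_subset (subset_univ A) hzero, ← nsmul_eq_mul]
  exact sum_le_card_nsmul _ _ _ fun j _ => by simpa using norm_le_pi_norm v j

lemma abs_mulVec_sub_self_le [DecidableEq ι] {G : Matrix ι ι ℝ} {μ : ℝ} (hμ : 0 ≤ μ)
    (hdiag : ∀ i, G i i = 1) (hoff : ∀ i j, i ≠ j → |G i j| ≤ μ) {A : Finset ι} {v : ι → ℝ}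
    (hv : Function.support v ⊆ A) (i : ι) : |(G *ᵥ v) i - v i| ≤ μ * (#A * ‖v‖) := by
  have hsplit : (G *ᵥ v) i - v i = ∑ j ∈ univ.erase i, G i j * v j := by
    rw [mulVec, dotProduct, ← add_sum_erase _ _ (mem_univ i), hdiag, one_mul, add_sub_cancel_left]
  calc |(G *ᵥ v) i - v i| ≤ ∑ j ∈ univ.erase i, |G i j| * |v j| := by
        rw [hsplit]; simpa only [abs_mul] using abs_sum_le_sum_abs (fun j => G i j * v j) _
    _ ≤ ∑ j ∈ univ.erase i, μ * |v j| := sum_le_sum fun j hj =>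
        mul_le_mul_of_nonneg_right (hoff i j (ne_of_mem_erase hj).symm) (abs_nonneg _)
    _ ≤ ∑ j, μ * |v j| := sum_le_sum_of_subset_of_nonneg (erase_subset _ _)
        fun j _ _ => mul_nonneg hμ (abs_nonneg _)
    _ ≤ μ * (#A * ‖v‖) := by
        rw [← mul_sum]; exact mul_le_mul_of_nonneg_left (sum_abs_le_card_mul_norm hv) hμ

end Sparse

section Ista

variable {m ι : Type*} [Fintype m] [Fintype ι]

noncomputable def istaStep (Ψ : Matrix m ι ℝ) (y : m → ℝ) (lam : ℝ) (z : ι → ℝ) : ι → ℝ :=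
  fun i => softThresh lam (z i + Ψ.transpose.mulVec (y - Ψ.mulVec z) i)

lemma gradStep_sub_eq (Ψ : Matrix m ι ℝ) (x z : ι → ℝ) (η : m → ℝ) :
    z + Ψᵀ *ᵥ (Ψ *ᵥ x + η - Ψ *ᵥ z) - x = Ψᵀ *ᵥ η - ((Ψᵀ * Ψ) *ᵥ (z - x) - (z - x)) := by
  simp only [mulVec_add, mulVec_sub, ← mulVec_mulVec]
  abel

variable [DecidableEq ι] {Ψ : Matrix m ι ℝ} {μ ε : ℝ} {η : m → ℝ} {A : Finset ι} {x : ι → ℝ}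

lemma abs_gradStep_sub_le (hμ : 0 ≤ μ) (hcol : ∀ i, ∑ k, Ψ k i ^ 2 = 1)
    (hcoh : ∀ i j, i ≠ j → |∑ k, Ψ k i * Ψ k j| ≤ μ) (hη : √(∑ k, η k ^ 2) ≤ ε)
    (hx : Function.support x ⊆ A) {z : ι → ℝ} (hz : Function.support z ⊆ A) (i : ι) :
    |z i + (Ψᵀ *ᵥ (Ψ *ᵥ x + η - Ψ *ᵥ z)) i - x i| ≤ μ * (#A * ‖z - x‖) + ε := by
  have hgram : ∀ i j, (Ψᵀ * Ψ) i j = ∑ k, Ψ k i * Ψ k j := fun i j => by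
    simp only [mul_apply, transpose_apply]
  have hdiag : ∀ i, (Ψᵀ * Ψ) i i = 1 := fun i => by simpa only [hgram, ← sq] using hcol i
  have hoff : ∀ i j, i ≠ j → |(Ψᵀ * Ψ) i j| ≤ μ := fun i j hij => hgram i j ▸ hcoh i j hij
  have hsupp : Function.support (z - x) ⊆ A :=
    (Function.support_sub z x).trans (Set.union_subset hz hx)
  have hnoise : |(Ψᵀ *ᵥ η) i| ≤ ε := (abs_sum_mul_le_sqrt_sum_sq (hcol i) η).trans hη
  calc |z i + (Ψᵀ *ᵥ (Ψ *ᵥ x + η - Ψ *ᵥ z)) i - x i|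
      = |(Ψᵀ *ᵥ η) i - (((Ψᵀ * Ψ) *ᵥ (z - x)) i - (z - x) i)| :=
        congrArg abs (congrFun (gradStep_sub_eq Ψ x z η) i)
    _ ≤ ε + μ * (#A * ‖z - x‖) :=
        (abs_sub _ _).trans (add_le_add hnoise (abs_mulVec_sub_self_le hμ hdiag hoff hsupp i))
    _ = μ * (#A * ‖z - x‖) + ε := add_comm _ _

lemma istaStep_mapsTo_sparseBall (hμ : 0 ≤ μ) (hcol : ∀ i, ∑ k, Ψ k i ^ 2 = 1)
    (hcoh : ∀ i j, i ≠ j → |∑ k, Ψ k i * Ψ k j| ≤ μ) (hη : √(∑ k, η k ^ 2) ≤ ε)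
    (hx : Function.support x ⊆ A) {lam r : ℝ} (hlam_nonneg : 0 ≤ lam)
    (hlam : μ * (#A * r) + ε ≤ lam) :
    Set.MapsTo (istaStep Ψ (Ψ *ᵥ x + η) lam) (sparseBall A x r) (sparseBall A x (2 * lam)) := by
  rintro z ⟨hz, hzr⟩
  have hw : ∀ i, |z i + (Ψᵀ *ᵥ (Ψ *ᵥ x + η - Ψ *ᵥ z)) i - x i| ≤ lam := fun i =>
    (abs_gradStep_sub_le hμ hcol hcoh hη hx hz i).trans (hlam.trans' (by gcongr))
  refine ⟨fun i hi => by_contra fun hiA => hi ?_, ?_⟩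
  · refine softThresh_eq_zero_of_abs_le ?_
    simpa [Function.notMem_support.mp fun h => hiA (hx h)] using hw i
  · exact (pi_norm_le_iff_of_nonneg (by linarith)).mpr fun i => abs_softThresh_sub_le_two_mul (hw i)

lemma istaStep_iterate_mapsTo_sparseBall (hμ : 0 ≤ μ) (hcol : ∀ i, ∑ k, Ψ k i ^ 2 = 1)
    (hcoh : ∀ i j, i ≠ j → |∑ k, Ψ k i * Ψ k j| ≤ μ) (hη : √(∑ k, η k ^ 2) ≤ ε)
    (hx : Function.support x ⊆ A) {C₁ α γ lam : ℝ} {K : ℕ} (hK : 0 < K) (hC₁ : 0 < C₁)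
    (hα : μ * #A * α = 1 - 1 / C₁) (hα₀ : 0 ≤ α) (hαγ : 2 ≤ α * γ) (hγ : γ ≤ 1)
    (hlam : C₁ * ε ≤ lam) :
    Set.MapsTo (istaStep Ψ (Ψ *ᵥ x + η) lam)^[K]
      (sparseBall A x (α * lam)) (sparseBall A x (α * γ * lam)) := by
  have hlam_nonneg : 0 ≤ lam := (mul_nonneg hC₁.le ((Real.sqrt_nonneg _).trans hη)).trans hlam
  have hεlam : ε ≤ 1 / C₁ * lam := by rw [one_div_mul_eq_div, le_div_iff₀ hC₁]; linarith
  refine ((istaStep_mapsTo_sparseBall hμ hcol hcoh hη hx hlam_nonneg ?_).mono_right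
    (sparseBall_mono ?_)).iterate_of_subset (sparseBall_mono ?_) hK
  · rw [← mul_assoc, ← mul_assoc, hα]; linarith
  · exact mul_le_mul_of_nonneg_right hαγ hlam_nonneg
  · exact mul_le_mul_of_nonneg_right (mul_le_of_le_one_right hα₀ hγ) hlam_nonneg

end Ista

/-- Induction claim (4) for ISTC: along the continuation path `λ_ℓ = γ^ℓ lam₀`, with
`x(lam₀) = 0` and `x(λ_ℓ)` obtained by `K` soft-thresholding iterations at level `λ_ℓ`
warm-started from `x(λ_{ℓ−1})`, if `‖x†‖_{ℓ∞} ≤ αγlam₀`, then for every `ℓ` with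
`λ_ℓ ≥ λ* = C₁ε` one has `supp(x(λ_ℓ)) ⊂ A†` and `‖x(λ_ℓ) − x†‖_{ℓ∞} ≤ αγλ_ℓ`. -/
theorem istc_induction_claim {n p : ℕ} (Ψ : Matrix (Fin n) (Fin p) ℝ)
    (μ ε C₁ α γ lam₀ : ℝ) (s K : ℕ)
    (xdag : Fin p → ℝ) (η y : Fin n → ℝ) (Adag : Finset (Fin p))
    (hcol : ∀ i, ∑ k, Ψ k i ^ 2 = 1)
    (hcoh : ∀ i j, i ≠ j → |∑ k, Ψ k i * Ψ k j| ≤ μ) (hμpos : 0 < μ)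
    (hsuppdag : Function.support xdag = (Adag : Set (Fin p)))
    (hcard : Adag.card = s) (hs : 1 ≤ s) (hμs : μ * s < 1 / 2)
    (hy : y = Ψ.mulVec xdag + η)
    (hη : Real.sqrt (∑ k, η k ^ 2) ≤ ε)
    (hC : 1 / (1 - 2 * μ * s) < C₁)
    (hα : α = (1 - 1 / C₁) / (μ * s))
    (hγ : γ ∈ Set.Ico (2 * μ * s / (1 - 1 / C₁)) 1)
    (hK : 1 ≤ K)
    (xseq : ℕ → Fin p → ℝ)
    (hx0 : xseq 0 = 0)
    (hxstep : ∀ ℓ : ℕ, xseq (ℓ + 1) =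
      (fun z : Fin p → ℝ => fun i =>
          softThresh (γ ^ (ℓ + 1) * lam₀)
            (z i + Ψ.transpose.mulVec (y - Ψ.mulVec z) i))^[K] (xseq ℓ))
    (hlam₀ : ‖xdag‖ ≤ α * γ * lam₀) :
    ∀ ℓ : ℕ, C₁ * ε ≤ γ ^ ℓ * lam₀ →
      Function.support (xseq ℓ) ⊆ (Adag : Set (Fin p)) ∧
      ‖xseq ℓ - xdag‖ ≤ α * γ * (γ ^ ℓ * lam₀) := by
  subst hy
  obtain ⟨hC₁, hα₀, hμsα, hαγ⟩ :=
    istc_param_bounds (mul_pos hμpos (by exact_mod_cast hs)) hμs hC hα hγ.1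
  have hlevel : ∀ lam, C₁ * ε ≤ lam → Set.MapsTo (istaStep Ψ (Ψ *ᵥ xdag + η) lam)^[K]
      (sparseBall Adag xdag (α * lam)) (sparseBall Adag xdag (α * γ * lam)) := fun _ =>
    istaStep_iterate_mapsTo_sparseBall hμpos.le hcol hcoh hη (hsuppdag ▸ subset_rfl) hK
      (by linarith) (by rw [hcard]; exact hμsα) hα₀.le hαγ hγ.2.le
  have hdecr : ∀ ℓ, γ ^ (ℓ + 1) * lam₀ ≤ γ ^ ℓ * lam₀ := fun ℓ =>
    mul_le_mul_of_nonneg_right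
      (pow_le_pow_of_le_one (nonneg_of_mul_nonneg_right (by linarith) hα₀) hγ.2.le ℓ.le_succ)
      (nonneg_of_mul_nonneg_right ((norm_nonneg _).trans hlam₀) (by linarith))
  intro ℓ
  induction ℓ with
  | zero => intro _; simpa [sparseBall, hx0] using hlam₀
  | succ ℓ ih =>
    intro hlam
    have hprev : xseq ℓ ∈ sparseBall Adag xdag (α * (γ ^ (ℓ + 1) * lam₀)) := by
      rw [show α * (γ ^ (ℓ + 1) * lam₀) = α * γ * (γ ^ ℓ * lam₀) by ring]
      exact ih (hlam.trans (hdecr ℓ))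
    rw [hxstep]
    exact hlevel _ hlam hprev
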